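/- arXiv:1601.08221 — 4 statements merged into one kernel-verified Lean document; each statement's English description precedes it below -/
import Mathlib

section
/- In the reduced scheduling graph, where a start-up edge is allowed only if the most recently provisioned VM is non-empty and placement edges may only assign queries to the most recently provisioned VM, every goal vertex of the full scheduling graph whose schedule contains no empty VM is still reachable from the start vertex. -/
/-- A vertex of the scheduling graph: a partial schedule (list of VMs, most
recently created first, each a typed queue of queries) together with the
multiset of unassigned queries. -/
structure SVertex (Query VMType : Type) where
  vms : List (VMType × List Query)
  unassigned : Multiset Query

/-- One step of the *reduced* scheduling graph: a start-up edge is allowed only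
when the most recently provisioned VM (if any) is non-empty, and a placement
edge appends an unassigned query to the queue of the most recently provisioned
VM. -/
inductive RStep {Query VMType : Type} [DecidableEq Query] :
    SVertex Query VMType → SVertex Query VMType → Prop
  | startup (v : SVertex Query VMType) (i : VMType)
      (h : ∀ hd ∈ v.vms.head?, hd.2 ≠ []) :
      RStep v ⟨(i, []) :: v.vms, v.unassigned⟩
  | place (v : SVertex Query VMType) (q : Query) (hd : VMType × List Query)
      (tl : List (VMType × List Query))
      (hv : v.vms = hd :: tl) (hq : q ∈ v.unassigned) :
      RStep v ⟨(hd.1, hd.2 ++ [q]) :: tl, v.unassigned.erase q⟩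

/-! The schedule is built VM by VM, oldest first: start up the VM, then place its whole queue
in order. Every start-up is legal because the previously built VM is non-empty. -/

namespace RStep

variable {Query VMType : Type} [DecidableEq Query]

theorem reflTransGen_place_queue (qs pre : List Query) (i : VMType)
    (tl : List (VMType × List Query)) (u : Multiset Query) :
    Relation.ReflTransGen RStep
      (⟨(i, pre) :: tl, u + ↑qs⟩ : SVertex Query VMType) ⟨(i, pre ++ qs) :: tl, u⟩ := by
  induction qs generalizing pre with
  | nil => simpa using Relation.ReflTransGen.refl
  | cons q qs ih =>
    have hq : q ∈ u + ↑(q :: qs) := by simp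
    have herase : (u + ↑(q :: qs)).erase q = u + ↑qs := by
      rw [Multiset.erase_add_right_pos _ (by simp), ← Multiset.cons_coe, Multiset.erase_cons_head]
    refine .head (RStep.place _ q (i, pre) tl rfl hq) ?_
    simpa [herase] using ih (pre ++ [q])

theorem reflTransGen_build_schedule (L : List (VMType × List Query)) (u : Multiset Query)
    (hL : ∀ vm ∈ L, vm.2 ≠ []) :
    Relation.ReflTransGen RStep
      (⟨[], u + (L.map fun vm => (vm.2 : Multiset Query)).sum⟩ : SVertex Query VMType)
      ⟨L, u⟩ := by
  induction L generalizing u with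
  | nil => simpa using Relation.ReflTransGen.refl
  | cons vm tl ih =>
    have hbuild := ih (u + ↑vm.2) fun x hx => hL x (List.mem_cons_of_mem _ hx)
    have hstart : RStep (⟨tl, u + ↑vm.2⟩ : SVertex Query VMType)
        ⟨(vm.1, []) :: tl, u + ↑vm.2⟩ :=
      RStep.startup _ vm.1 fun hd hhd =>
        hL hd (List.mem_cons_of_mem _ (List.mem_of_mem_head? hhd))
    have hsum : u + ((vm :: tl).map fun vm => (vm.2 : Multiset Query)).sum
        = u + ↑vm.2 + (tl.map fun vm => (vm.2 : Multiset Query)).sum := by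
      simp [add_assoc]
    rw [hsum]
    exact hbuild.trans (.head hstart (by simpa using reflTransGen_place_queue vm.2 [] vm.1 tl u))

end RStep

/-- In the reduced scheduling graph, every goal vertex of the full scheduling
graph (all queries of `Q` assigned, partitioned among the VM queues) whose
schedule contains no empty VM is reachable from the start vertex. -/
theorem stmt3 {Query VMType : Type} [DecidableEq Query]
    (Q : Multiset Query) (g : SVertex Query VMType)
    (hgoal : g.unassigned = 0)
    (hpart : (g.vms.map (fun vm => (vm.2 : Multiset Query))).sum = Q)
    (hnonempty : ∀ vm ∈ g.vms, vm.2 ≠ []) :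
    Relation.ReflTransGen RStep ⟨[], Q⟩ g := by
  obtain ⟨L, u⟩ := g
  dsimp only at hgoal hpart hnonempty
  subst hgoal hpart
  simpa using RStep.reflTransGen_build_schedule L 0 hnonempty
end

section
/- Any vertex in the reduced scheduling graph has at most one empty VM in its partial schedule, and if an empty VM exists it is the most recently created one. -/
theorem List.length_filter_le_one_of_forall_tail {α : Type*} (p : α → Bool) (l : List α)
    (h : ∀ a ∈ l.tail, p a = false) : (l.filter p).length ≤ 1 := by
  cases l with
  | nil => simp
  | cons hd tl =>
    have htl : tl.filter p = [] := List.filter_eq_nil_iff.mpr fun a ha => by simpa using h a ha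
    rw [List.filter_cons, htl]
    split <;> simp

def SVertex.TailNonempty {Query VMType : Type} (v : SVertex Query VMType) : Prop :=
  ∀ vm ∈ v.vms.tail, vm.2 ≠ []

theorem RStep.tailNonempty {Query VMType : Type} [DecidableEq Query]
    {v w : SVertex Query VMType} (hstep : RStep v w) (hv : v.TailNonempty) :
    w.TailNonempty := by
  cases hstep with
  | startup _ hhead =>
    intro vm hvm
    cases hvms : v.vms with
    | nil => simp [hvms] at hvm
    | cons hd tl =>
      rw [List.tail_cons, hvms, List.mem_cons] at hvm
      rcases hvm with rfl | hmem
      · exact hhead vm (by simp [hvms])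
      · exact hv vm (by simp [hvms, hmem])
  | place _ _ _ hvms _ =>
    intro vm hvm
    exact hv vm (by simpa [hvms] using hvm)

/-- Any vertex reachable in the reduced scheduling graph has at most one empty
VM in its partial schedule, and if an empty VM exists it is the most recently
created one (every VM other than the head of the list is non-empty). -/
theorem stmt4 {Query VMType : Type} [DecidableEq Query]
    (Q : Multiset Query) (v : SVertex Query VMType)
    (hreach : Relation.ReflTransGen RStep ⟨[], Q⟩ v) :
    (v.vms.filter (fun vm => vm.2.isEmpty)).length ≤ 1 ∧
      ∀ vm ∈ v.vms.tail, vm.2 ≠ [] := by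
  have htail : v.TailNonempty := by
    induction hreach with
    | refl => simp [SVertex.TailNonempty]
    | tail _ hstep ih => exact hstep.tailNonempty ih
  exact ⟨List.length_filter_le_one_of_forall_tail _ _ fun vm hvm => by simpa using htail vm hvm,
    htail⟩
end

section
/- In the reduced scheduling graph, every complete schedule consisting of a sequence of non-empty VMs (each a queue of queries from Q partitioning Q) is reachable by exactly one path from the start vertex. -/
/-!
Every vertex other than the start has exactly one predecessor in the reduced graph: if its
most recent VM is empty, it was just started up; otherwise its last query was just placed.
So paths into a vertex can be traced back uniquely, and since the start vertex has no
predecessor, any two paths from it to the same vertex coincide. Conversely, a complete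
schedule is built by starting up its VMs from the oldest on and filling each queue in order
before the next start-up, which is legal because every queue is non-empty.
-/

namespace List

variable {α : Type*} {r : α → α → Prop}

theorem IsChain.eq_of_rightUnique (hr : Relator.RightUnique r) {s : α} (hs : ∀ b, ¬ r s b) :
    ∀ {p p' : List α}, p.IsChain r → p'.IsChain r → p.head? = p'.head? →
      p.getLast? = some s → p'.getLast? = some s → p = p'
  | [], _, _, _, _, hl, _ => by simp at hl
  | _, [], _, _, _, _, hl' => by simp at hl'
  | [_], [_], _, _, h, _, _ => by simpa using h
  | [a], b :: c :: t, _, hp', h, hl, _ => by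
    obtain rfl : a = b := by simpa using h
    obtain rfl : a = s := by simpa using hl
    exact absurd (isChain_cons_cons.1 hp').1 (hs c)
  | b :: c :: t, [a], hp, _, h, _, hl' => by
    obtain rfl : b = a := by simpa using h
    obtain rfl : b = s := by simpa using hl'
    exact absurd (isChain_cons_cons.1 hp).1 (hs c)
  | a :: b :: t, a' :: b' :: t', hp, hp', h, hl, hl' => by
    obtain rfl : a = a' := by simpa using h
    rw [isChain_cons_cons] at hp hp'
    obtain rfl : b = b' := hr hp.1 hp'.1
    rw [getLast?_cons_cons] at hl hl'
    rw [eq_of_rightUnique hr hs hp.2 hp'.2 rfl hl hl']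

theorem IsChain.eq_of_leftUnique (hr : Relator.LeftUnique r) {s : α} (hs : ∀ a, ¬ r a s)
    {p p' : List α} (hp : p.IsChain r) (hp' : p'.IsChain r) (h : p.head? = some s)
    (h' : p'.head? = some s) (hl : p.getLast? = p'.getLast?) : p = p' :=
  reverse_injective <|
    IsChain.eq_of_rightUnique (r := flip r) (fun _ _ _ hb hc => hr hb hc) hs
      (isChain_reverse.2 hp) (isChain_reverse.2 hp')
      (by rw [head?_reverse, head?_reverse, hl]) (by rw [getLast?_reverse, h])
      (by rw [getLast?_reverse, h'])

end List

variable {Query VMType : Type}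

namespace SVertex

def prev? (v : SVertex Query VMType) : Option (SVertex Query VMType) :=
  match v.vms with
  | [] => none
  | (i, l) :: tl =>
    if hl : l = [] then some ⟨tl, v.unassigned⟩
    else some ⟨(i, l.dropLast) :: tl, l.getLast hl ::ₘ v.unassigned⟩

end SVertex

variable [DecidableEq Query]

namespace RStep

theorem prev?_eq {a b : SVertex Query VMType} (h : RStep a b) : b.prev? = some a := by
  cases h with
  | startup => simp [SVertex.prev?]
  | place q hd tl hv hq =>
    cases a
    simp_all [SVertex.prev?, Multiset.cons_erase hq]

theorem leftUnique : Relator.LeftUnique (@RStep Query VMType _) :=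
  fun _ _ _ ha hb => Option.some_injective _ (ha.prev?_eq.symm.trans hb.prev?_eq)

theorem vms_ne_nil {a b : SVertex Query VMType} (h : RStep a b) : b.vms ≠ [] := by
  cases h <;> simp

theorem reflTransGen_place_list (i : VMType) (tl : List (VMType × List Query)) (l : List Query)
    (u : Multiset Query) :
    Relation.ReflTransGen RStep (⟨(i, []) :: tl, ↑l + u⟩ : SVertex Query VMType)
      ⟨(i, l) :: tl, u⟩ := by
  induction l using List.reverseRecOn generalizing u with
  | nil => simpa using Relation.ReflTransGen.refl
  | append_singleton l q ih =>
    have hplace :=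
      RStep.place ⟨(i, l) :: tl, q ::ₘ u⟩ q (i, l) tl rfl (Multiset.mem_cons_self q u)
    rw [Multiset.erase_cons_head] at hplace
    have hu : ((l ++ [q] : List Query) : Multiset Query) + u = ↑l + q ::ₘ u := by
      rw [← Multiset.coe_add, add_assoc, Multiset.coe_singleton, Multiset.singleton_add]
    exact hu ▸ (ih (q ::ₘ u)).tail hplace

theorem reflTransGen_of_forall_ne_nil (vms : List (VMType × List Query)) (u : Multiset Query)
    (hvms : ∀ vm ∈ vms, vm.2 ≠ []) :
    Relation.ReflTransGen RStep
      (⟨[], (vms.map fun vm => (vm.2 : Multiset Query)).sum + u⟩ : SVertex Query VMType)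
      ⟨vms, u⟩ := by
  induction vms generalizing u with
  | nil => simpa using Relation.ReflTransGen.refl
  | cons vm tl ih =>
    obtain ⟨i, l⟩ := vm
    have hstart := RStep.startup ⟨tl, ↑l + u⟩ i
      (fun hd hhd => hvms hd (List.mem_cons_of_mem _ (List.mem_of_mem_head? hhd)))
    have hsum : ((l : Multiset Query) + (tl.map fun vm => (vm.2 : Multiset Query)).sum) + u
        = (tl.map fun vm => (vm.2 : Multiset Query)).sum + (↑l + u) := by
      rw [add_comm (l : Multiset Query), add_assoc]
    simpa only [List.map_cons, List.sum_cons, hsum] using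
      ((ih (↑l + u) fun vm hvm => hvms vm (List.mem_cons_of_mem _ hvm)).tail hstart).trans
        (reflTransGen_place_list i tl l u)

end RStep

/-- In the reduced scheduling graph, every complete schedule consisting of a
sequence of non-empty VMs whose queues partition the workload `Q` is reachable
from the start vertex by exactly one path (represented as the list of vertices
visited, chained by reduced steps). -/
theorem stmt5 {Query VMType : Type} [DecidableEq Query]
    (Q : Multiset Query) (g : SVertex Query VMType)
    (hgoal : g.unassigned = 0)
    (hpart : (g.vms.map (fun vm => (vm.2 : Multiset Query))).sum = Q)
    (hnonempty : ∀ vm ∈ g.vms, vm.2 ≠ []) :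
    ∃! p : List (SVertex Query VMType),
      List.Chain' RStep p ∧ p.head? = some ⟨[], Q⟩ ∧ p.getLast? = some g := by
  have hreach : Relation.ReflTransGen RStep ⟨[], Q⟩ g := by
    convert RStep.reflTransGen_of_forall_ne_nil g.vms g.unassigned hnonempty using 3
    rw [hgoal, add_zero, hpart]
  obtain ⟨p, hp, hend⟩ := List.exists_isChain_cons_of_relationReflTransGen hreach
  have hlast : (⟨[], Q⟩ :: p).getLast? = some g := by
    rw [List.getLast?_eq_some_getLast (List.cons_ne_nil _ _), hend]
  refine ⟨_, ⟨hp, rfl, hlast⟩, ?_⟩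
  rintro p' ⟨hp', hstart', hend'⟩
  exact List.IsChain.eq_of_leftUnique RStep.leftUnique (fun _ h => h.vms_ne_nil rfl) hp' hp
    hstart' rfl (hend'.trans hlast.symm)
end

section
/- If P(R,·) ≥ 0 with P of the empty schedule zero, f^i_s ≥ 0, f^i_r ≥ 0, and latencies l(q,i) ≥ 0, then in the scheduling graph every path weight is nonnegative, and for monotonically increasing goals every individual edge weight is nonnegative. -/
/-!
Write every edge weight as `w u v = base u v + P v - P u` with `base ≥ 0`. Along a path the
penalty differences telescope, so a path from `a` to `b` weighs at least `P b - P a ≥ -P a`;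
from the start vertex, where `P` vanishes, this is `≥ 0`. For a monotone goal the penalty
difference of each single edge is already nonnegative.
-/

section SchedulingGraph

variable {V : Type*} {E : V → V → Prop} {w base : V → V → ℝ} {P : V → ℝ}

def pathWeight (w : V → V → ℝ) (p : List V) : ℝ :=
  ((p.zip p.tail).map fun uv => w uv.1 uv.2).sum

@[simp]
lemma pathWeight_singleton (w : V → V → ℝ) (a : V) : pathWeight w [a] = 0 := by
  simp [pathWeight]

@[simp]
lemma pathWeight_cons_cons (w : V → V → ℝ) (a b : V) (l : List V) :
    pathWeight w (a :: b :: l) = w a b + pathWeight w (b :: l) := by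
  simp [pathWeight]

lemma neg_le_pathWeight (hw : ∀ u v, E u v → w u v = base u v + P v - P u)
    (hbase : ∀ u v, E u v → 0 ≤ base u v) (hP : ∀ v, 0 ≤ P v) :
    ∀ (a : V) (l : List V), (a :: l).IsChain E → -P a ≤ pathWeight w (a :: l)
  | a, [], _ => by simpa using hP a
  | a, b :: l, hc => by
    rw [List.isChain_cons_cons] at hc
    have hrest := neg_le_pathWeight hw hbase hP b l hc.2
    rw [pathWeight_cons_cons, hw a b hc.1]
    linarith [hbase a b hc.1]

end SchedulingGraph

/-- In the scheduling graph, every edge weight decomposes as a nonnegative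
base cost (start-up or processing cost) plus the penalty difference
`P v − P u`.  If `P ≥ 0` and the start vertex carries zero penalty, then every
path from the start vertex has nonnegative total weight; and for monotonically
increasing goals (`P u ≤ P v` along every edge) every individual edge weight
is nonnegative. -/
theorem stmt13 {V : Type} (E : V → V → Prop) (w base : V → V → ℝ) (P : V → ℝ)
    (start : V)
    (hw : ∀ u v, E u v → w u v = base u v + P v - P u)
    (hbase : ∀ u v, E u v → 0 ≤ base u v)
    (hP : ∀ v, 0 ≤ P v) (hstart : P start = 0) :
    (∀ p : List V, p.Chain' E → p.head? = some start →
        0 ≤ ((p.zip p.tail).map (fun uv => w uv.1 uv.2)).sum) ∧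
    ((∀ u v, E u v → P u ≤ P v) → ∀ u v, E u v → 0 ≤ w u v) := by
  refine ⟨?_, fun hmono u v huv => ?_⟩
  · rintro (_ | ⟨a, l⟩) hc hhead
    · simp at hhead
    · obtain rfl : a = start := by simpa using hhead
      have hweight := neg_le_pathWeight hw hbase hP a l hc
      rwa [hstart, neg_zero] at hweight
  · linarith [hw u v huv, hbase u v huv, hmono u v huv]
end
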